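/- For every integer m ≥ 0, the code C(m+1, m, m+1, m, m) is an optimal Hermitian LCD quaternary [5m+4, 2, 4m+2] code. -/
import Mathlib


open Finset

/-- The finite field with four elements. -/
abbrev F4 : Type := GaloisField 2 2

noncomputable instance : Fintype F4 := Fintype.ofFinite F4

lemma F4.card_eq : Fintype.card F4 = 4 := by
  simpa using GaloisField.card 2 2 (by norm_num)

lemma F4.exists_omega : ∃ x : F4, x ^ 2 + x + 1 = 0 := by
  classical
  obtain ⟨x, hx0, hx1⟩ : ∃ x : F4, x ≠ 0 ∧ x ≠ 1 := by
    by_contra h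
    push_neg at h
    have hsub : (Finset.univ : Finset F4) ⊆ {0, 1} := by
      intro x _
      rcases eq_or_ne x 0 with h0 | h0
      · simp [h0]
      · simp [h x h0]
    have h1 := Finset.card_le_card hsub
    have h2 : ({0, 1} : Finset F4).card ≤ 2 := (Finset.card_insert_le _ _).trans (by simp)
    have h3 : (Finset.univ : Finset F4).card = 4 := F4.card_eq
    omega
  refine ⟨x, ?_⟩
  have hx : x ^ Fintype.card F4 = x := FiniteField.pow_card x
  rw [F4.card_eq] at hx
  have hmul : x * (x - 1) * (x ^ 2 + x + 1) = 0 := by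
    have : x * (x - 1) * (x ^ 2 + x + 1) = x ^ 4 - x := by ring
    rw [this, hx, sub_self]
  rcases mul_eq_zero.mp hmul with h | h
  · rcases mul_eq_zero.mp h with h | h
    · exact absurd h hx0
    · exact absurd (sub_eq_zero.mp h) hx1
  · exact h

/-- A fixed root of `X² + X + 1` in `F₄`. -/
noncomputable def ω4 : F4 := Classical.choose F4.exists_omega

lemma ω4_spec : ω4 ^ 2 + ω4 + 1 = 0 := Classical.choose_spec F4.exists_omega

open scoped Classical in
/-- Hamming weight of a vector. -/
noncomputable def wt {n : ℕ} (x : Fin n → F4) : ℕ :=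
  (Finset.univ.filter fun i => x i ≠ 0).card

/-- `C` is a code with minimum (nonzero) weight `d`. -/
noncomputable def hasMinWeight {n : ℕ} (C : Submodule F4 (Fin n → F4)) (d : ℕ) : Prop :=
  (∀ x ∈ C, x ≠ 0 → d ≤ wt x) ∧ ∃ x ∈ C, x ≠ 0 ∧ wt x = d

/-- The Hermitian inner product on `F₄ⁿ`; the conjugate of `x` is `x²`. -/
noncomputable def hermInner {n : ℕ} (u v : Fin n → F4) : F4 := ∑ i, u i * (v i) ^ 2

/-- The Hermitian dual code. -/
noncomputable def hermDual {n : ℕ} (C : Submodule F4 (Fin n → F4)) : Submodule F4 (Fin n → F4) where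
  carrier := {x | ∀ y ∈ C, hermInner x y = 0}
  zero_mem' := by intro y hy; simp [hermInner]
  add_mem' := by
    intro a b ha hb y hy
    have := ha y hy
    have := hb y hy
    simp only [hermInner, Pi.add_apply, add_mul, Finset.sum_add_distrib] at *
    simp [*]
  smul_mem' := by
    intro c a ha y hy
    have h := ha y hy
    simp only [hermInner, Pi.smul_apply, smul_eq_mul, mul_assoc, ← Finset.mul_sum] at *
    simp [h]

/-- `C` is a Hermitian linear complementary dual code. -/
noncomputable def IsHermLCD {n : ℕ} (C : Submodule F4 (Fin n → F4)) : Prop :=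
  C ⊓ hermDual C = ⊥

/-- The monomial linear map given by a permutation of coordinates followed by a
multiplication of each coordinate by a scalar. -/
noncomputable def monoMap {n : ℕ} (σ : Equiv.Perm (Fin n)) (s : Fin n → F4) :
    (Fin n → F4) →ₗ[F4] (Fin n → F4) where
  toFun x := fun i => s i * x (σ i)
  map_add' a b := by funext i; simp [mul_add]
  map_smul' c a := by funext i; simp [smul_eq_mul]; ring

/-- Two codes are equivalent if one is obtained from the other by a permutation of the
coordinates and multiplication of coordinates by nonzero scalars. -/
noncomputable def codeEquiv {n : ℕ} (C C' : Submodule F4 (Fin n → F4)) : Prop :=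
  ∃ (σ : Equiv.Perm (Fin n)) (s : Fin n → F4),
    (∀ i, s i ≠ 0) ∧ Submodule.map (monoMap σ s) C = C'

/-- First row of the generator matrix `G(a₁, a₂, a₃, a₄, a₅)`. -/
noncomputable def row1 (n a₁ : ℕ) : Fin n → F4 := fun i =>
  if i.val = 0 then 1
  else if i.val < 2 + a₁ then 0
  else 1

/-- Second row of the generator matrix `G(a₁, a₂, a₃, a₄, a₅)`. -/
noncomputable def row2 (n a₁ a₂ a₃ a₄ : ℕ) : Fin n → F4 := fun i =>
  if i.val = 0 then 0
  else if i.val < 2 + a₁ then 1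
  else if i.val < 2 + a₁ + a₂ then 0
  else if i.val < 2 + a₁ + a₂ + a₃ then 1
  else if i.val < 2 + a₁ + a₂ + a₃ + a₄ then ω4
  else ω4 ^ 2

set_option linter.unusedVariables false in
/-- The code `C(a₁, a₂, a₃, a₄, a₅)`, of length `n = 2 + a₁ + a₂ + a₃ + a₄ + a₅`:
the span of the rows of the generator matrix `G(a₁, a₂, a₃, a₄, a₅)` whose columns are
`(1,0)ᵀ`, `(0,1)ᵀ`, `a₁` columns `(0,1)ᵀ`, `a₂` columns `(1,0)ᵀ`, `a₃` columns `(1,1)ᵀ`,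
`a₄` columns `(1,ω)ᵀ` and `a₅` columns `(1,ω²)ᵀ`. -/
noncomputable def Ccode (n a₁ a₂ a₃ a₄ a₅ : ℕ) : Submodule F4 (Fin n → F4) :=
  Submodule.span F4 {row1 n a₁, row2 n a₁ a₂ a₃ a₄}

/-- The largest minimum weight among Hermitian LCD `[n,2]` codes. -/
def optimalDist (n : ℕ) : ℕ :=
  if n % 5 = 1 ∨ n % 5 = 2 ∨ n % 5 = 3 then 4 * n / 5 else 4 * n / 5 - 1

/-- `C` is an optimal Hermitian LCD `[n, 2, d]` code. -/
noncomputable def IsOptimalLCD (n d : ℕ) (C : Submodule F4 (Fin n → F4)) : Prop :=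
  Module.finrank F4 C = 2 ∧ hasMinWeight C d ∧ IsHermLCD C ∧ d = optimalDist n

/-- The linear map appending a zero coordinate: `x ↦ (x, 0)`. -/
noncomputable def extendZero (m : ℕ) : (Fin m → F4) →ₗ[F4] (Fin (m + 1) → F4) where
  toFun x := Fin.snoc x 0
  map_add' a b := by
    funext i
    refine Fin.lastCases ?_ ?_ i <;> simp
  map_smul' c a := by
    funext i
    refine Fin.lastCases ?_ ?_ i <;> simp

section Aux
lemma F4.char2 : (2 : F4) = 0 := by
  have := CharP.cast_eq_zero F4 2
  exact_mod_cast this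

lemma ω4_ne_zero : ω4 ≠ 0 := by
  intro h
  have := ω4_spec
  rw [h] at this
  simp at this

lemma ω4_ne_one : ω4 ≠ 1 := by
  intro h
  have h1 := ω4_spec
  rw [h] at h1
  have h2 := F4.char2
  have : (1 : F4) = 0 := by linear_combination h1 - h2
  simp at this

/-- Splitting a sum over `Fin (5m+4)` into the six regions. -/
lemma key_sum {M : Type*} [AddCommMonoid M] (m : ℕ) (F : Fin (5*m+4) → M)
    (c1 c2 c3 c4 c5 c6 : M)
    (h1 : ∀ i : Fin (5*m+4), i.val = 0 → F i = c1)
    (h2 : ∀ i : Fin (5*m+4), 1 ≤ i.val → i.val < m+3 → F i = c2)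
    (h3 : ∀ i : Fin (5*m+4), m+3 ≤ i.val → i.val < 2*m+3 → F i = c3)
    (h4 : ∀ i : Fin (5*m+4), 2*m+3 ≤ i.val → i.val < 3*m+4 → F i = c4)
    (h5 : ∀ i : Fin (5*m+4), 3*m+4 ≤ i.val → i.val < 4*m+4 → F i = c5)
    (h6 : ∀ i : Fin (5*m+4), 4*m+4 ≤ i.val → i.val < 5*m+4 → F i = c6) :
    ∑ i, F i = c1 + (m+2) • c2 + m • c3 + (m+1) • c4 + m • c5 + m • c6 := by
  classical
  set f : ℕ → M := fun j => if h : j < 5*m+4 then F ⟨j, h⟩ else 0 with hf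
  have fval : ∀ (j : ℕ) (h : j < 5*m+4), f j = F ⟨j, h⟩ := by
    intro j h; simp only [hf]; rw [dif_pos h]
  have hF : ∀ i : Fin (5*m+4), F i = f i.val := by
    intro i; rw [fval i.val i.isLt]
  have piece : ∀ (a b : ℕ) (c : M), a ≤ b → b ≤ 5*m+4 →
      (∀ (j : ℕ), a ≤ j → j < b → ∀ h : j < 5*m+4, F ⟨j, h⟩ = c) →
      ∑ i ∈ Finset.Ico a b, f i = (b - a) • c := by
    intro a b c hab hb hc
    rw [Finset.sum_congr rfl (fun j hj => by
      obtain ⟨hj1, hj2⟩ := Finset.mem_Ico.mp hj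
      rw [fval j (by omega)]
      exact hc j hj1 hj2 (by omega)),
      Finset.sum_const, Nat.card_Ico]
  have e1 : ∑ i ∈ Finset.Ico 0 1, f i = c1 := by
    have := piece 0 1 c1 (by omega) (by omega)
      (fun j hj1 hj2 h => h1 ⟨j, h⟩ (Nat.lt_one_iff.mp hj2))
    rw [this]; simp
  have e2 : ∑ i ∈ Finset.Ico 1 (m+3), f i = (m+2) • c2 := by
    have := piece 1 (m+3) c2 (by omega) (by omega)
      (fun j hj1 hj2 h => h2 ⟨j, h⟩ hj1 hj2)
    rw [this]; congr 1 <;> omega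
  have e3 : ∑ i ∈ Finset.Ico (m+3) (2*m+3), f i = m • c3 := by
    have := piece (m+3) (2*m+3) c3 (by omega) (by omega)
      (fun j hj1 hj2 h => h3 ⟨j, h⟩ hj1 hj2)
    rw [this]; congr 1 <;> omega
  have e4 : ∑ i ∈ Finset.Ico (2*m+3) (3*m+4), f i = (m+1) • c4 := by
    have := piece (2*m+3) (3*m+4) c4 (by omega) (by omega)
      (fun j hj1 hj2 h => h4 ⟨j, h⟩ hj1 hj2)
    rw [this]; congr 1 <;> omega
  have e5 : ∑ i ∈ Finset.Ico (3*m+4) (4*m+4), f i = m • c5 := by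
    have := piece (3*m+4) (4*m+4) c5 (by omega) (by omega)
      (fun j hj1 hj2 h => h5 ⟨j, h⟩ hj1 hj2)
    rw [this]; congr 1 <;> omega
  have e6 : ∑ i ∈ Finset.Ico (4*m+4) (5*m+4), f i = m • c6 := by
    have := piece (4*m+4) (5*m+4) c6 (by omega) (by omega)
      (fun j hj1 hj2 h => h6 ⟨j, h⟩ hj1 hj2)
    rw [this]; congr 1 <;> omega
  calc ∑ i, F i = ∑ i : Fin (5*m+4), f i.val := Finset.sum_congr rfl (fun i _ => hF i)
    _ = ∑ i ∈ Finset.range (5*m+4), f i := Fin.sum_univ_eq_sum_range f _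
    _ = c1 + (m+2) • c2 + m • c3 + (m+1) • c4 + m • c5 + m • c6 := by
        rw [Finset.range_eq_Ico,
          ← Finset.sum_Ico_consecutive f (show 0 ≤ 4*m+4 by omega) (show 4*m+4 ≤ 5*m+4 by omega),
          ← Finset.sum_Ico_consecutive f (show 0 ≤ 3*m+4 by omega) (show 3*m+4 ≤ 4*m+4 by omega),
          ← Finset.sum_Ico_consecutive f (show 0 ≤ 2*m+3 by omega) (show 2*m+3 ≤ 3*m+4 by omega),
          ← Finset.sum_Ico_consecutive f (show 0 ≤ m+3 by omega) (show m+3 ≤ 2*m+3 by omega),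
          ← Finset.sum_Ico_consecutive f (show 0 ≤ 1 by omega) (show 1 ≤ m+3 by omega),
          e1, e2, e3, e4, e5, e6]
end Aux

section Aux2
variable (m : ℕ)

/-- abbreviations -/
noncomputable def R1 (m : ℕ) : Fin (5*m+4) → F4 := row1 (5*m+4) (m+1)
noncomputable def R2 (m : ℕ) : Fin (5*m+4) → F4 := row2 (5*m+4) (m+1) m (m+1) m

lemma R1_val (i : Fin (5*m+4)) :
    (i.val = 0 → R1 m i = 1) ∧ (1 ≤ i.val → i.val < m+3 → R1 m i = 0) ∧
    (m+3 ≤ i.val → R1 m i = 1) := by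
  refine ⟨?_, ?_, ?_⟩ <;> intros <;>
    simp only [R1, row1] <;> split_ifs <;> first | rfl | omega

lemma R2_val (i : Fin (5*m+4)) :
    (i.val = 0 → R2 m i = 0) ∧ (1 ≤ i.val → i.val < m+3 → R2 m i = 1) ∧
    (m+3 ≤ i.val → i.val < 2*m+3 → R2 m i = 0) ∧
    (2*m+3 ≤ i.val → i.val < 3*m+4 → R2 m i = 1) ∧
    (3*m+4 ≤ i.val → i.val < 4*m+4 → R2 m i = ω4) ∧
    (4*m+4 ≤ i.val → R2 m i = ω4^2) := by
  refine ⟨?_, ?_, ?_, ?_, ?_, ?_⟩ <;> intros <;>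
    simp only [R2, row2] <;> split_ifs <;> first | rfl | omega

open scoped Classical in
/-- weight of a general codeword -/
lemma wt_formula (a b : F4) :
    wt (a • R1 m + b • R2 m) =
      (if a ≠ 0 then 1 else 0) + (m+2) * (if b ≠ 0 then 1 else 0)
      + m * (if a ≠ 0 then 1 else 0) + (m+1) * (if a + b ≠ 0 then 1 else 0)
      + m * (if a + b * ω4 ≠ 0 then 1 else 0) + m * (if a + b * ω4^2 ≠ 0 then 1 else 0) := by
  classical
  have hx : ∀ i : Fin (5*m+4), (a • R1 m + b • R2 m) i = a * R1 m i + b * R2 m i := by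
    intro i; simp
  rw [wt]
  rw [Finset.card_filter]
  rw [key_sum m _ (if a ≠ 0 then 1 else 0) (if b ≠ 0 then 1 else 0) (if a ≠ 0 then 1 else 0)
      (if a + b ≠ 0 then 1 else 0) (if a + b * ω4 ≠ 0 then 1 else 0)
      (if a + b * ω4^2 ≠ 0 then 1 else 0)]
  · simp only [nsmul_eq_mul, Nat.cast_id]; try ring
  · intro i h
    rw [hx, (R1_val m i).1 h, (R2_val m i).1 h]; try simp only [mul_one, mul_zero, add_zero, zero_add]
  · intro i h h'
    rw [hx, (R1_val m i).2.1 h h', (R2_val m i).2.1 h h']; try simp only [mul_one, mul_zero, add_zero, zero_add]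
  · intro i h h'
    rw [hx, (R1_val m i).2.2 (by omega), (R2_val m i).2.2.1 h h']; try simp only [mul_one, mul_zero, add_zero, zero_add]
  · intro i h h'
    rw [hx, (R1_val m i).2.2 (by omega), (R2_val m i).2.2.2.1 h h']; try simp only [mul_one, mul_zero, add_zero, zero_add]
  · intro i h h'
    rw [hx, (R1_val m i).2.2 (by omega), (R2_val m i).2.2.2.2.1 h h']; try simp only [mul_one, mul_zero, add_zero, zero_add]
  · intro i h h'
    rw [hx, (R1_val m i).2.2 (by omega), (R2_val m i).2.2.2.2.2 (by omega)]; try simp only [mul_one, mul_zero, add_zero, zero_add]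
end Aux2

section Aux3
variable (m : ℕ)

lemma hermInner_add_left {n : ℕ} (u v w : Fin n → F4) :
    hermInner (u + v) w = hermInner u w + hermInner v w := by
  simp [hermInner, add_mul, Finset.sum_add_distrib]

lemma hermInner_smul_left {n : ℕ} (c : F4) (u w : Fin n → F4) :
    hermInner (c • u) w = c * hermInner u w := by
  simp [hermInner, Finset.mul_sum, mul_assoc]

lemma herm_I11 : hermInner (R1 m) (R1 m) = 0 := by
  rw [hermInner]
  rw [key_sum m _ (1*1^2) (0*0^2) (1*1^2) (1*1^2) (1*1^2) (1*1^2)]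
  · simp only [nsmul_eq_mul]
    push_cast
    linear_combination (((m:F4))*2 + 1) * F4.char2
  · intro i h; rw [(R1_val m i).1 h]
  · intro i h h'; rw [(R1_val m i).2.1 h h']
  · intro i h h'; rw [(R1_val m i).2.2 (by omega)]
  · intro i h h'; rw [(R1_val m i).2.2 (by omega)]
  · intro i h h'; rw [(R1_val m i).2.2 (by omega)]
  · intro i h h'; rw [(R1_val m i).2.2 (by omega)]

lemma herm_I21 : hermInner (R2 m) (R1 m) = 1 := by
  rw [hermInner]
  rw [key_sum m _ (0*1^2) (1*0^2) (0*1^2) (1*1^2) (ω4*1^2) (ω4^2*1^2)]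
  · simp only [nsmul_eq_mul]
    push_cast
    linear_combination (m:F4) * ω4_spec
  · intro i h; rw [(R1_val m i).1 h, (R2_val m i).1 h]
  · intro i h h'; rw [(R1_val m i).2.1 h h', (R2_val m i).2.1 h h']
  · intro i h h'; rw [(R1_val m i).2.2 (by omega), (R2_val m i).2.2.1 h h']
  · intro i h h'; rw [(R1_val m i).2.2 (by omega), (R2_val m i).2.2.2.1 h h']
  · intro i h h'; rw [(R1_val m i).2.2 (by omega), (R2_val m i).2.2.2.2.1 h h']
  · intro i h h'; rw [(R1_val m i).2.2 (by omega), (R2_val m i).2.2.2.2.2 (by omega)]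

lemma herm_I12 : hermInner (R1 m) (R2 m) = 1 := by
  rw [hermInner]
  rw [key_sum m _ (1*0^2) (0*1^2) (1*0^2) (1*1^2) (1*ω4^2) (1*(ω4^2)^2)]
  · simp only [nsmul_eq_mul]
    push_cast
    linear_combination (m:F4) * (ω4^2 - ω4 + 1) * ω4_spec
  · intro i h; rw [(R1_val m i).1 h, (R2_val m i).1 h]
  · intro i h h'; rw [(R1_val m i).2.1 h h', (R2_val m i).2.1 h h']
  · intro i h h'; rw [(R1_val m i).2.2 (by omega), (R2_val m i).2.2.1 h h']
  · intro i h h'; rw [(R1_val m i).2.2 (by omega), (R2_val m i).2.2.2.1 h h']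
  · intro i h h'; rw [(R1_val m i).2.2 (by omega), (R2_val m i).2.2.2.2.1 h h']
  · intro i h h'; rw [(R1_val m i).2.2 (by omega), (R2_val m i).2.2.2.2.2 (by omega)]
end Aux3

section Main

lemma Ccode_eq (m : ℕ) :
    Ccode (5*m+4) (m+1) m (m+1) m m = Submodule.span F4 {R1 m, R2 m} := rfl

lemma R1_mem (m : ℕ) : R1 m ∈ Ccode (5*m+4) (m+1) m (m+1) m m :=
  Submodule.subset_span (Set.mem_insert _ _)

lemma R2_mem (m : ℕ) : R2 m ∈ Ccode (5*m+4) (m+1) m (m+1) m m :=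
  Submodule.subset_span (Set.mem_insert_of_mem _ rfl)

lemma R_li (m : ℕ) : LinearIndependent F4 ![R1 m, R2 m] := by
  rw [LinearIndependent.pair_iff]
  intro s t hst
  have h0 := congrFun hst (⟨0, by omega⟩ : Fin (5*m+4))
  have h1 := congrFun hst (⟨1, by omega⟩ : Fin (5*m+4))
  simp only [Pi.add_apply, Pi.smul_apply, smul_eq_mul, Pi.zero_apply] at h0 h1
  rw [(R1_val m _).1 rfl, (R2_val m _).1 rfl] at h0
  rw [(R1_val m ⟨1, by omega⟩).2.1 (le_refl 1) (show (1:ℕ) < m+3 by omega),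
      (R2_val m ⟨1, by omega⟩).2.1 (le_refl 1) (show (1:ℕ) < m+3 by omega)] at h1
  constructor
  · simpa using h0
  · simpa using h1

lemma finrank_Ccode (m : ℕ) :
    Module.finrank F4 (Ccode (5*m+4) (m+1) m (m+1) m m) = 2 := by
  have h := finrank_span_eq_card (R_li m)
  have hr : Set.range ![R1 m, R2 m] = {R1 m, R2 m} := by
    ext x
    simp [Fin.exists_fin_two, or_comm]
  rw [hr] at h
  rw [Ccode_eq, h]
  simp

lemma herm_x_r1 (m : ℕ) (a b : F4) :
    hermInner (a • R1 m + b • R2 m) (R1 m) = b := by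
  rw [hermInner_add_left, hermInner_smul_left, hermInner_smul_left, herm_I11, herm_I21]
  ring

lemma lcd_Ccode (m : ℕ) : IsHermLCD (Ccode (5*m+4) (m+1) m (m+1) m m) := by
  rw [IsHermLCD, eq_bot_iff]
  intro x hx
  obtain ⟨hxC, hxD⟩ := Submodule.mem_inf.mp hx
  obtain ⟨a, b, hab⟩ := Submodule.mem_span_pair.mp (by rw [Ccode_eq] at hxC; exact hxC)
  have hd1 : hermInner x (R1 m) = 0 := hxD (R1 m) (R1_mem m)
  have hd2 : hermInner x (R2 m) = 0 := hxD (R2 m) (R2_mem m)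
  rw [← hab, herm_x_r1] at hd1
  subst hd1
  rw [zero_smul, add_zero] at hab
  rw [← hab, hermInner_smul_left, herm_I12, mul_one] at hd2
  subst hd2
  rw [zero_smul] at hab
  rw [← hab]
  simp

lemma R1_ne_zero (m : ℕ) : R1 m ≠ 0 := by
  intro h
  have := congrFun h (⟨0, by omega⟩ : Fin (5*m+4))
  rw [(R1_val m _).1 rfl] at this
  exact one_ne_zero this

lemma wt_R1 (m : ℕ) : wt (R1 m) = 4*m+2 := by
  have h : (1:F4) • R1 m + (0:F4) • R2 m = R1 m := by
    rw [one_smul, zero_smul, add_zero]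
  rw [← h, wt_formula]
  rw [if_pos (one_ne_zero), if_neg (by simp),
      if_pos (show (1:F4) + 0 ≠ 0 by simp),
      if_pos (show (1:F4) + 0 * ω4 ≠ 0 by simp),
      if_pos (show (1:F4) + 0 * ω4^2 ≠ 0 by simp)]
  ring

lemma minwt_Ccode (m : ℕ) :
    hasMinWeight (Ccode (5*m+4) (m+1) m (m+1) m m) (4*m+2) := by
  constructor
  · intro x hx hne
    obtain ⟨a, b, hab⟩ := Submodule.mem_span_pair.mp (by rw [Ccode_eq] at hx; exact hx)
    have hne' : ¬(a = 0 ∧ b = 0) := by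
      rintro ⟨rfl, rfl⟩
      apply hne
      rw [← hab, zero_smul, zero_smul, add_zero]
    rw [← hab, wt_formula]
    by_cases ha : a = 0
    · have hb : b ≠ 0 := fun hb => hne' ⟨ha, hb⟩
      rw [if_neg (by simp [ha]), if_pos hb,
          if_pos (show a + b ≠ 0 by rw [ha, zero_add]; exact hb),
          if_pos (show a + b * ω4 ≠ 0 by rw [ha, zero_add]; exact mul_ne_zero hb ω4_ne_zero),
          if_pos (show a + b * ω4^2 ≠ 0 by
            rw [ha, zero_add]; exact mul_ne_zero hb (pow_ne_zero 2 ω4_ne_zero))]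
      omega
    · by_cases hb : b = 0
      · rw [if_pos ha, if_neg (by simp [hb]),
            if_pos (show a + b ≠ 0 by rw [hb, add_zero]; exact ha),
            if_pos (show a + b * ω4 ≠ 0 by rw [hb, zero_mul, add_zero]; exact ha),
            if_pos (show a + b * ω4^2 ≠ 0 by rw [hb, zero_mul, add_zero]; exact ha)]
        omega
      · rw [if_pos ha, if_pos hb]
        by_cases h3 : a + b = 0
        · have h4 : a + b * ω4 ≠ 0 := by
            intro h4
            apply ω4_ne_one
            have hbx : b * (ω4 - 1) = 0 := by linear_combination h4 - h3
            have := (mul_eq_zero.mp hbx).resolve_left hb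
            exact sub_eq_zero.mp this
          have h5 : a + b * ω4^2 ≠ 0 := by
            intro h5
            apply ω4_ne_zero
            have hbx : b * (ω4^2 - 1) = 0 := by linear_combination h5 - h3
            have hsq : ω4^2 = 1 := by
              have := (mul_eq_zero.mp hbx).resolve_left hb
              exact sub_eq_zero.mp this
            linear_combination ω4_spec - hsq - F4.char2
          rw [if_neg (by simpa using h3), if_pos h4, if_pos h5]
          omega
        · rw [if_pos h3]
          by_cases h4 : a + b * ω4 = 0
          · have h5 : a + b * ω4^2 ≠ 0 := by
              intro h5
              have hbx : b * (ω4^2 - ω4) = 0 := by linear_combination h5 - h4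
              have hz := (mul_eq_zero.mp hbx).resolve_left hb
              have hf : ω4 * (ω4 - 1) = 0 := by linear_combination hz
              rcases mul_eq_zero.mp hf with h | h
              · exact ω4_ne_zero h
              · exact ω4_ne_one (sub_eq_zero.mp h)
            rw [if_neg (by simpa using h4), if_pos h5]
            omega
          · rw [if_pos h4]
            by_cases h5 : a + b * ω4^2 = 0
            · rw [if_neg (by simpa using h5)]; omega
            · rw [if_pos h5]; omega
  · exact ⟨R1 m, R1_mem m, R1_ne_zero m, wt_R1 m⟩

lemma optimalDist_eq (m : ℕ) : optimalDist (5*m+4) = 4*m+2 := by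
  rw [optimalDist, if_neg (by omega)]
  omega

end Main


/-- `C(m + 1, m, m + 1, m, m)` is an optimal Hermitian LCD
`[5m + 4, 2, 4m + 2]` code for every `m ≥ 0`. -/
theorem stmt19 (m : ℕ) :
    IsOptimalLCD (5 * m + 4) (4 * m + 2)
      (Ccode (5 * m + 4) (m + 1) m (m + 1) m m) := by
  exact ⟨finrank_Ccode m, minwt_Ccode m, lcd_Ccode m, (optimalDist_eq m).symm⟩
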